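/- For all $(x,y,z)\in\mathbb{R}^3$ with $x^2\ge z^2$, the matrix identity holds: $\begin{pmatrix} x^2+2z^2 & -xy & -xz\\ -xy & y^2+2x^2 & -yz\\ -xz & -yz & z^2+2y^2\end{pmatrix} = v v^T + 2 w w^T + 2z^2 E_{11} + 2(x^2-z^2)E_{22}$, where $v=(-x,y,z)^T$, $w=(0,-z,y)^T$, and $E_{11},E_{22}$ are the diagonal matrix units; in particular, on the region $x^2\ge z^2$ the Choi matrix is a sum of positive semi-definite matrices and hence positive semi-definite there. -/

import Mathlib

open Matrix

lemma Matrix.posSemidef_single_self {n R : Type*} [Fintype n] [DecidableEq n] [CommRing R]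
    [PartialOrder R] [StarRing R] [StarOrderedRing R] (i : n) {r : R} (hr : 0 ≤ r) :
    (single i i r).PosSemidef :=
  diagonal_single i r ▸ PosSemidef.diagonal (Pi.single_nonneg.2 hr)

lemma Matrix.posSemidef_vecMulVec_self {n : Type*} [Fintype n] (v : n → ℝ) :
    (vecMulVec v v).PosSemidef :=
  posSemidef_vecMulVec_self_star v

def choiMatrix (x y z : ℝ) : Matrix (Fin 3) (Fin 3) ℝ :=
  !![x^2 + 2*z^2, -(x*y), -(x*z);
     -(x*y), y^2 + 2*x^2, -(y*z);
     -(x*z), -(y*z), z^2 + 2*y^2]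

lemma choiMatrix_eq (x y z : ℝ) :
    choiMatrix x y z = vecMulVec ![-x, y, z] ![-x, y, z]
      + (2 : ℝ) • vecMulVec ![0, -z, y] ![0, -z, y]
      + (2*z^2) • single 0 0 1
      + (2*(x^2 - z^2)) • single 1 1 1 := by
  ext i j
  fin_cases i <;> fin_cases j <;>
    simp [choiMatrix, single] <;> ring

lemma choiMatrix_posSemidef {x z : ℝ} (y : ℝ) (h : z^2 ≤ x^2) :
    (choiMatrix x y z).PosSemidef := by
  rw [choiMatrix_eq]
  refine (((posSemidef_vecMulVec_self _).add
    ((posSemidef_vecMulVec_self _).smul zero_le_two)).add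
    ((posSemidef_single_self 0 zero_le_one).smul (by positivity))).add
    ((posSemidef_single_self 1 zero_le_one).smul ?_)
  linarith

theorem stmt_9 (x y z : ℝ) (h : x^2 ≥ z^2) :
    (!![x^2 + 2*z^2, -(x*y), -(x*z);
        -(x*y), y^2 + 2*x^2, -(y*z);
        -(x*z), -(y*z), z^2 + 2*y^2] : Matrix (Fin 3) (Fin 3) ℝ)
      = vecMulVec ![-x, y, z] ![-x, y, z]
        + (2 : ℝ) • vecMulVec ![0, -z, y] ![0, -z, y]
        + (2*z^2) • single 0 0 1
        + (2*(x^2 - z^2)) • single 1 1 1 ∧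
    (!![x^2 + 2*z^2, -(x*y), -(x*z);
        -(x*y), y^2 + 2*x^2, -(y*z);
        -(x*z), -(y*z), z^2 + 2*y^2] : Matrix (Fin 3) (Fin 3) ℝ).PosSemidef :=
  ⟨choiMatrix_eq x y z, choiMatrix_posSemidef y h⟩
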